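/- Two distinct runs R1 and R2 in a string T overlap in fewer than per(R1) + per(R2) positions. -/

import Mathlib

/-- `p` is a period of the string (list) `S`. -/
def IsPeriod {α : Type*} (S : List α) (p : ℕ) : Prop :=
  0 < p ∧ ∀ i, i + p < S.length → S[i]? = S[i + p]?

/-- The smallest period of `S`. -/
noncomputable def minPeriod {α : Type*} (S : List α) : ℕ :=
  sInf {p | IsPeriod S p}

/-- `P` occurs in `S` at (0-indexed) position `i`. -/
def OccursAt {α : Type*} (P S : List α) (i : ℕ) : Prop :=
  (S.drop i).take P.length = P ∧ i + P.length ≤ S.length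

/-- The fragment `T[a..b]` (0-indexed, inclusive). -/
def frag {α : Type*} (T : List α) (a b : ℕ) : List α :=
  (T.drop a).take (b + 1 - a)

/-- `T[a..b]` is a run (maximal periodic fragment) of `T`. -/
def IsRun {α : Type*} (T : List α) (a b : ℕ) : Prop :=
  a ≤ b ∧ b < T.length ∧
  2 * minPeriod (frag T a b) ≤ b + 1 - a ∧
  (a = 0 ∨ T[a - 1]? ≠ T[a - 1 + minPeriod (frag T a b)]?) ∧
  (b + 1 = T.length ∨ T[b + 1]? ≠ T[b + 1 - minPeriod (frag T a b)]?)

/-- The occurrence of the square `U · U` at position `s` of `T` is induced by the run `T[a..b]`. -/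
def InducedOcc {α : Type*} (T U : List α) (s a b : ℕ) : Prop :=
  U ≠ [] ∧ IsRun T a b ∧ OccursAt (U ++ U) T s ∧ a ≤ s ∧
  s + 2 * U.length ≤ b + 1 ∧ minPeriod U = minPeriod (frag T a b)

/-- The `k`-th power `V^k` of a string `V`. -/
def listPow {α : Type*} (V : List α) (k : ℕ) : List α :=
  (List.replicate k V).flatten

/-!
Let `p₁, p₂` be the minimal periods of the two runs and suppose their overlap has length at least
`p₁ + p₂`. By the weak periodicity lemma `g = gcd p₁ p₂` is a period of the overlap. A period `g`
of a window of length at least `p + g` inside a fragment of period `p` is a period of the whole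
fragment (every position is congruent modulo `p` to one at the start of the window), so by
minimality `p₁ = g = p₂`. Two runs with the same period `p` that overlap in at least `p` positions
coincide: otherwise one of them would extend the other, contradicting maximality.
-/

/-- Unlike `IsPeriod`, this allows `p = 0`, which makes the gcd recursion uniform. -/
def IsPeriodOn {α : Type*} (T : List α) (a b p : ℕ) : Prop :=
  ∀ i, a ≤ i → i + p ≤ b → T[i]? = T[i + p]?

lemma Nat.exists_modEq_mem_Ico {p : ℕ} (hp : 0 < p) (i c : ℕ) :
    ∃ j, c ≤ j ∧ j < c + p ∧ j ≡ i [MOD p] := by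
  -- `j = c + (i + p * c - c) % p`, written so that no subtraction truncates
  refine ⟨c + (i + (p - 1) * c) % p, by omega,
    by have := Nat.mod_lt (i + (p - 1) * c) hp; omega, ?_⟩
  calc c + (i + (p - 1) * c) % p ≡ c + (i + (p - 1) * c) [MOD p] :=
        (Nat.mod_modEq _ _).add_left c
    _ = i + p * c := by
        obtain ⟨p, rfl⟩ := Nat.exists_eq_add_of_lt hp
        simp only [Nat.zero_add, Nat.add_sub_cancel]
        ring
    _ ≡ i [MOD p] := Nat.add_mul_mod_self_left i p c

lemma minPeriod_isPeriod {α : Type*} (S : List α) : IsPeriod S (minPeriod S) :=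
  Nat.sInf_mem (s := {p | IsPeriod S p}) ⟨S.length + 1, Nat.succ_pos _, fun i hi => by omega⟩

lemma minPeriod_pos {α : Type*} (S : List α) : 0 < minPeriod S :=
  (minPeriod_isPeriod S).1

lemma minPeriod_le {α : Type*} {S : List α} {p : ℕ} (h : IsPeriod S p) : minPeriod S ≤ p :=
  Nat.sInf_le h

namespace IsPeriodOn

variable {α : Type*} {T : List α} {a b c d p q : ℕ}

lemma mono (h : IsPeriodOn T a b p) (hc : a ≤ c) (hd : d ≤ b) : IsPeriodOn T c d p :=
  fun i hi hip => h i (by omega) (by omega)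

lemma getElem?_eq_add_mul (h : IsPeriodOn T a b p) (k : ℕ) {i : ℕ} (hi : a ≤ i)
    (hik : i + k * p ≤ b) : T[i]? = T[i + k * p]? := by
  induction k with
  | zero => simp
  | succ k ih =>
    rw [Nat.succ_mul] at hik
    rw [ih (by omega), h _ (by omega) (by omega), Nat.succ_mul, Nat.add_assoc]

lemma getElem?_eq_of_modEq (h : IsPeriodOn T a b p) {i j : ℕ} (hi : a ≤ i) (hj : a ≤ j)
    (hib : i ≤ b) (hjb : j ≤ b) (hij : i ≡ j [MOD p]) : T[i]? = T[j]? := by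
  wlog hle : i ≤ j generalizing i j
  · exact (this hj hi hjb hib hij.symm (by omega)).symm
  obtain ⟨k, hk⟩ := (Nat.modEq_iff_dvd' hle).1 hij
  have hj_eq : j = i + k * p := by rw [Nat.mul_comm, ← hk]; omega
  subst hj_eq
  exact h.getElem?_eq_add_mul k hi hjb

lemma sub (hp : IsPeriodOn T a b p) (hq : IsPeriodOn T a b q) (hpq : p ≤ q)
    (hlen : a + p + q ≤ b + 1) : IsPeriodOn T a b (q - p) := by
  intro i hi hiqp
  by_cases hiq : i + q ≤ b
  · rw [hq i hi hiq, hp (i + (q - p)) (by omega) (by omega),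
      Nat.add_assoc, Nat.sub_add_cancel hpq]
  · have e1 := hp (i - p) (by omega) (by omega)
    have e2 := hq (i - p) (by omega) (by omega)
    rw [Nat.sub_add_cancel (by omega : p ≤ i)] at e1
    rw [show i - p + q = i + (q - p) by omega] at e2
    rw [← e1, e2]

/-- Weak periodicity lemma. -/
lemma gcd (hp : IsPeriodOn T a b p) (hq : IsPeriodOn T a b q) (hlen : a + p + q ≤ b + 1) :
    IsPeriodOn T a b (p.gcd q) := by
  induction hn : p + q using Nat.strong_induction_on generalizing p q with
  | _ n ih =>
    wlog hpq : p ≤ q generalizing p q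
    · rw [Nat.gcd_comm]
      exact this hq hp (by omega) (by omega) (by omega)
    rcases Nat.eq_zero_or_pos p with rfl | hp0
    · rwa [Nat.gcd_zero_left]
    rw [← Nat.gcd_sub_self_right hpq]
    exact ih (p + (q - p)) (by omega) hp (hp.sub hq hpq hlen) (by omega) rfl

lemma of_window (hp : IsPeriodOn T a b p) (hp0 : 0 < p) (hg : IsPeriodOn T c d q)
    (hac : a ≤ c) (hdb : d ≤ b) (hwin : c + p + q ≤ d + 1) : IsPeriodOn T a b q := by
  intro i hi hiq
  obtain ⟨j, hcj, hjc, hji⟩ := Nat.exists_modEq_mem_Ico hp0 i c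
  calc T[i]? = T[j]? := hp.getElem?_eq_of_modEq hi (by omega) (by omega) (by omega) hji.symm
    _ = T[j + q]? := hg j hcj (by omega)
    _ = T[i + q]? := hp.getElem?_eq_of_modEq (by omega) (by omega) (by omega) hiq
        (hji.add_right q)

end IsPeriodOn

section Frag

variable {α : Type*} {T : List α} {a b p : ℕ}

lemma frag_length (hab : a ≤ b) (hb : b < T.length) : (frag T a b).length = b + 1 - a := by
  simp only [frag, List.length_take, List.length_drop]
  omega

lemma frag_getElem? {i : ℕ} (hi : i < b + 1 - a) : (frag T a b)[i]? = T[a + i]? := by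
  rw [frag, List.getElem?_take, if_pos hi, List.getElem?_drop]

lemma isPeriod_frag_iff (hab : a ≤ b) (hb : b < T.length) :
    IsPeriod (frag T a b) p ↔ 0 < p ∧ IsPeriodOn T a b p := by
  rw [IsPeriod, frag_length hab hb]
  refine and_congr_right fun _ => ⟨fun h i hi hip => ?_, fun h i hip => ?_⟩
  · have := h (i - a) (by omega)
    rwa [frag_getElem? (by omega), frag_getElem? (by omega), Nat.add_sub_cancel' hi,
      show a + (i - a + p) = i + p by omega] at this
  · rw [frag_getElem? (by omega), frag_getElem? (by omega), ← Nat.add_assoc]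
    exact h (a + i) (by omega) (by omega)

end Frag

namespace IsRun

variable {α : Type*} {T : List α} {a b a' b' c d q : ℕ}

lemma isPeriodOn (h : IsRun T a b) : IsPeriodOn T a b (minPeriod (frag T a b)) :=
  ((isPeriod_frag_iff h.1 h.2.1).1 (minPeriod_isPeriod _)).2

lemma minPeriod_le_of_window (h : IsRun T a b) (hq : 0 < q) (hP : IsPeriodOn T c d q)
    (hac : a ≤ c) (hdb : d ≤ b) (hwin : c + minPeriod (frag T a b) + q ≤ d + 1) :
    minPeriod (frag T a b) ≤ q :=
  minPeriod_le <| (isPeriod_frag_iff h.1 h.2.1).2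
    ⟨hq, h.isPeriodOn.of_window (minPeriod_pos _) hP hac hdb hwin⟩

lemma left_le_of_isPeriodOn (h : IsRun T a b) (hP : IsPeriodOn T a' b' (minPeriod (frag T a b)))
    (hlen : a + minPeriod (frag T a b) ≤ b' + 1) : a ≤ a' := by
  by_contra! ha'
  exact (h.2.2.2.1.resolve_left (by omega)) (hP (a - 1) (by omega) (by omega))

lemma le_right_of_isPeriodOn (h : IsRun T a b) (hP : IsPeriodOn T a' b' (minPeriod (frag T a b)))
    (hb' : b' < T.length) (hlen : a' + minPeriod (frag T a b) ≤ b + 1) : b' ≤ b := by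
  by_contra! hb
  have hper := hP (b + 1 - minPeriod (frag T a b)) (by omega) (by omega)
  rw [Nat.sub_add_cancel (by omega)] at hper
  exact h.2.2.2.2.resolve_left (by omega) hper.symm

lemma eq_of_minPeriod_eq (h : IsRun T a b) (h' : IsRun T a' b')
    (hp : minPeriod (frag T a b) = minPeriod (frag T a' b'))
    (hover : max a a' + minPeriod (frag T a b) ≤ min b b' + 1) : (a, b) = (a', b') := by
  have hP : IsPeriodOn T a b (minPeriod (frag T a' b')) := hp ▸ h.isPeriodOn
  have hP' : IsPeriodOn T a' b' (minPeriod (frag T a b)) := hp ▸ h'.isPeriodOn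
  have ha := h.left_le_of_isPeriodOn hP' (by omega)
  have ha' := h'.left_le_of_isPeriodOn hP (by omega)
  have hb := h.le_right_of_isPeriodOn hP' h'.2.1 (by omega)
  have hb' := h'.le_right_of_isPeriodOn hP h.2.1 (by omega)
  rw [Prod.mk.injEq]
  omega

end IsRun

/-- Two distinct runs `R1 = T[a1..b1]` and `R2 = T[a2..b2]` overlap in fewer than
`per(R1) + per(R2)` positions. -/
theorem stmt5 {α : Type*} (T : List α) (a1 b1 a2 b2 : ℕ)
    (h1 : IsRun T a1 b1) (h2 : IsRun T a2 b2)
    (hne : (a1, b1) ≠ (a2, b2)) :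
    min b1 b2 + 1 - max a1 a2 <
      minPeriod (frag T a1 b1) + minPeriod (frag T a2 b2) := by
  set p1 := minPeriod (frag T a1 b1)
  set p2 := minPeriod (frag T a2 b2)
  have hp1 : 0 < p1 := minPeriod_pos _
  have hp2 : 0 < p2 := minPeriod_pos _
  by_contra! hlong
  set c := max a1 a2
  set d := min b1 b2
  have hP1 : IsPeriodOn T c d p1 := h1.isPeriodOn.mono (le_max_left _ _) (min_le_left _ _)
  have hP2 : IsPeriodOn T c d p2 := h2.isPeriodOn.mono (le_max_right _ _) (min_le_right _ _)
  have hg := hP1.gcd hP2 (by omega)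
  have hg0 : 0 < p1.gcd p2 := Nat.gcd_pos_of_pos_left _ hp1
  have hg1 : p1.gcd p2 ≤ p1 := Nat.gcd_le_left p2 hp1
  have hg2 : p1.gcd p2 ≤ p2 := Nat.gcd_le_right (m := p1) hp2
  have hp1g : p1 = p1.gcd p2 := le_antisymm
    (h1.minPeriod_le_of_window hg0 hg (le_max_left _ _) (min_le_left _ _) (by omega)) hg1
  have hp2g : p2 = p1.gcd p2 := le_antisymm
    (h2.minPeriod_le_of_window hg0 hg (le_max_right _ _) (min_le_right _ _) (by omega)) hg2
  exact hne (h1.eq_of_minPeriod_eq h2 (hp1g.trans hp2g.symm) (by omega))
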